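/- arXiv:2508.20841 — 3 statements merged into one kernel-verified Lean document; each statement's English description precedes it below -/
import Mathlib

section
/- Let n ≥ 1. For every ε > 0 there exist μ ∈ (0,1) and δ ∈ (0,1), depending only on ε and n, such that the following holds. Let v : ℝⁿ → ℝ be Lipschitz on B₂ with Lipschitz constant at most 1 (so v is differentiable at Lebesgue-almost every point of B₂, with |Dv| ≤ 1 a.e.), and v(0) = 0. If for some e ∈ ℝⁿ with |e| = 1 the Lebesgue measure of {x ∈ B₁ : v is differentiable at x and Dv(x) · e ≤ δ} is at most μ · |B₁|, then there exist a ∈ [−1, 1] and ξ ∈ ℝⁿ with |ξ| = 1 such that sup_{x ∈ B₁} |v(x) − (a + ξ · x)| ≤ ε. -/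
/-!
Take `a = 0` and `ξ = e`, and put `w = v - ⟪e, ·⟫`, which is 2-Lipschitz on `B₁`. Where `v` is
differentiable with `⟪∇v, e⟫ > 1 - η² / 2`, the bound `‖∇v‖ ≤ 1` forces `‖∇v - e‖ ≤ η`, so
`‖Dw‖ ≤ η` off a set `S` of measure less than `c |B_r|`. Averaging over `y ∈ B_r` the time that the
segment `t ↦ y + t • x` spends in `S` (Tonelli and translation invariance) gives a segment that
spends time less than `c` in `S`; the fundamental theorem of calculus for the Lipschitz function
`t ↦ w (y + t • x)` then bounds `|w (y + x) - w y|` by `η + 2c`, and moving the endpoints to `x`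
and `0` costs `O(r)`.
-/

open Metric MeasureTheory Set InnerProductSpace
open scoped RealInnerProductSpace Topology NNReal ENNReal

theorem LipschitzWith.abs_sub_le_of_abs_deriv_le_outside {G : ℝ → ℝ} {L : ℝ≥0}
    (hG : LipschitzWith L G) {a b c : ℝ} (hab : a ≤ b) (hc : 0 ≤ c) {T : Set ℝ}
    (hT : MeasurableSet T) (h : ∀ t ∈ Ioc a b \ T, |deriv G t| ≤ c) :
    |G b - G a| ≤ c * (b - a) + L * volume.real (T ∩ Ioc a b) := by
  have hbound : ∀ᵐ t ∂volume.restrict (Ioc a b), ‖deriv G t‖ ≤ c + L * T.indicator 1 t := by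
    refine (ae_restrict_iff' measurableSet_Ioc).2 (ae_of_all _ fun t ht => ?_)
    by_cases htT : t ∈ T
    · simpa [htT] using (norm_deriv_le_of_lipschitz hG).trans (le_add_of_nonneg_left hc)
    · simpa [htT] using h t ⟨ht, htT⟩
  have hconst : IntegrableOn (fun _ => c) (Ioc a b) := integrable_const c
  have hind : IntegrableOn (fun t => (L : ℝ) * T.indicator 1 t) (Ioc a b) :=
    ((integrable_const 1).indicator hT).const_mul _
  rw [← (hG.lipschitzOnWith.absolutelyContinuousOnInterval).integral_deriv_eq_sub,
    intervalIntegral.integral_of_le hab]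
  refine (norm_integral_le_of_norm_le (hconst.add hind) hbound).trans_eq ?_
  simp only [Pi.add_apply]
  rw [integral_add hconst hind, setIntegral_const, integral_const_mul,
    integral_indicator_one hT, measureReal_restrict_apply hT, Real.volume_real_Ioc_of_le hab,
    smul_eq_mul, mul_comm]

section Segment

variable {E : Type*} [NormedAddCommGroup E] [NormedSpace ℝ E]

theorem lipschitzWith_segment (y x : E) : LipschitzWith ‖x‖₊ fun t : ℝ => y + t • x :=
  LipschitzWith.of_dist_le_mul fun s t => by
    simp [dist_eq_norm, ← sub_smul, norm_smul, mul_comm]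

variable [SecondCountableTopology E] [MeasurableSpace E] [BorelSpace E] (μ : Measure E) [SFinite μ]
  [μ.IsAddRightInvariant]

theorem exists_mem_volume_segment_preimage_lt {S B : Set E} (hS : MeasurableSet S) (x : E)
    {c : ℝ≥0∞} (h : μ S < c * μ B) :
    ∃ y ∈ B, volume ((fun t : ℝ => y + t • x) ⁻¹' S ∩ Ioc 0 1) < c := by
  set F : E → ℝ → ℝ≥0∞ := fun y t => S.indicator 1 (y + t • x)
  have hF : Measurable (Function.uncurry F) :=
    (measurable_const.indicator hS).comp (measurable_fst.add (measurable_snd.smul_const x))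
  have hslice : ∀ y, volume ((fun t : ℝ => y + t • x) ⁻¹' S ∩ Ioc 0 1) =
      ∫⁻ t in Ioc 0 1, F y t := fun y => by
    rw [← Measure.restrict_apply (hS.preimage (by fun_prop)),
      ← lintegral_indicator_one (hS.preimage (by fun_prop))]
    rfl
  have htranslate : ∀ t : ℝ, ∫⁻ y in B, F y t ∂μ ≤ μ S := fun t =>
    calc ∫⁻ y in B, F y t ∂μ ≤ ∫⁻ y, F y t ∂μ := setLIntegral_le_lintegral _ _
      _ = μ ((· + t • x) ⁻¹' S) := lintegral_indicator_one (hS.preimage (measurable_add_const _))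
      _ = μ S := measure_preimage_add_right μ _ S
  have hmean : ∫⁻ y in B, (∫⁻ t in Ioc 0 1, F y t) ∂μ ≤ μ S :=
    calc ∫⁻ y in B, (∫⁻ t in Ioc 0 1, F y t) ∂μ = ∫⁻ t in Ioc 0 1, ∫⁻ y in B, F y t ∂μ :=
          lintegral_lintegral_swap hF.aemeasurable
      _ ≤ ∫⁻ t in Ioc (0 : ℝ) 1, μ S := lintegral_mono fun t => htranslate t
      _ = μ S := by simp
  by_contra! hc
  refine (hmean.trans_lt h).not_ge ?_
  calc c * μ B = ∫⁻ _ in B, c ∂μ := (setLIntegral_const B c).symm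
    _ ≤ _ := setLIntegral_mono hF.lintegral_prod_right fun y hy => (hslice y) ▸ hc y hy

theorem LipschitzWith.abs_sub_le_of_norm_fderiv_le_outside {w : E → ℝ} {L : ℝ≥0}
    (hw : LipschitzWith L w) {S : Set E} {η c r R : ℝ} (hη : 0 ≤ η)
    (hS : μ S < ENNReal.ofReal c * μ (ball 0 r))
    (hgood : ∀ p ∈ ball (0 : E) R \ S, DifferentiableAt ℝ w p ∧ ‖fderiv ℝ w p‖ ≤ η)
    {x : E} (hx : ‖x‖ + r ≤ R) :
    |w x - w 0| ≤ (η + L * c) * ‖x‖ + 2 * L * r := by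
  have hc : 0 < c := ENNReal.ofReal_pos.1 (pos_iff_ne_zero.2 (left_ne_zero_of_mul hS.ne_bot))
  obtain ⟨y, hy, hyS⟩ := exists_mem_volume_segment_preimage_lt μ (measurableSet_toMeasurable μ S) x
    ((measure_toMeasurable S).trans_lt hS)
  have hy : ‖y‖ < r := by simpa using hy
  have hsegment := lipschitzWith_segment y x
  have hderiv : ∀ t ∈ Ioc (0 : ℝ) 1 \ (fun t : ℝ => y + t • x) ⁻¹' toMeasurable μ S,
      |deriv (fun t : ℝ => w (y + t • x)) t| ≤ η * ‖x‖ := by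
    rintro t ⟨⟨ht₀, ht₁⟩, htS⟩
    have hp : y + t • x ∈ ball (0 : E) R \ S := by
      refine ⟨?_, fun h => htS (subset_toMeasurable μ S h)⟩
      rw [mem_ball_zero_iff]
      calc ‖y + t • x‖ ≤ ‖y‖ + t * ‖x‖ := by
            simpa [norm_smul, abs_of_pos ht₀] using norm_add_le y (t • x)
        _ < r + 1 * ‖x‖ := add_lt_add_of_lt_of_le hy (by gcongr)
        _ ≤ R := by linarith
    obtain ⟨hdiff, hnorm⟩ := hgood _ hp
    have : HasDerivAt (fun t : ℝ => y + t • x) x t := by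
      simpa using ((hasDerivAt_id t).smul_const x).const_add y
    have hG : HasDerivAt (fun t : ℝ => w (y + t • x)) (fderiv ℝ w (y + t • x) x) t :=
      hdiff.hasFDerivAt.comp_hasDerivAt t this
    rw [hG.deriv]
    exact ((fderiv ℝ w _).le_opNorm x).trans (by gcongr)
  have hmid := (hw.comp hsegment).abs_sub_le_of_abs_deriv_le_outside zero_le_one (by positivity)
    ((measurableSet_toMeasurable μ S).preimage hsegment.continuous.measurable) hderiv
  have hbad : volume.real ((fun t : ℝ => y + t • x) ⁻¹' toMeasurable μ S ∩ Ioc 0 1) ≤ c :=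
    ENNReal.toReal_le_of_le_ofReal hc.le hyS.le
  have hshift : ∀ p q : E, |w p - w q| ≤ L * ‖p - q‖ := fun p q => by
    simpa [Real.dist_eq, dist_eq_norm] using hw.dist_le_mul p q
  simp only [Function.comp_apply, zero_smul, add_zero, one_smul, sub_zero, mul_one,
    NNReal.coe_mul, coe_nnnorm] at hmid
  have hmid' : |w (y + x) - w y| ≤ η * ‖x‖ + L * ‖x‖ * c := hmid.trans (by gcongr)
  have h₁ := hshift x (y + x)
  have h₂ := hshift y 0
  simp only [sub_add_cancel_right, norm_neg, sub_zero] at h₁ h₂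
  have hyL : L * ‖y‖ ≤ L * r := by gcongr
  linarith [abs_sub_le (w x) (w (y + x)) (w 0), abs_sub_le (w (y + x)) (w y) (w 0)]

theorem LipschitzOnWith.abs_sub_le_of_measure_not_norm_fderiv_le_lt {w : E → ℝ} {L : ℝ≥0}
    (hw : LipschitzOnWith L w (ball 0 1)) {η c r : ℝ} (hη : 0 ≤ η) (hr : r ≤ 1)
    (hS : μ {p ∈ ball (0 : E) 1 | ¬(DifferentiableAt ℝ w p ∧ ‖fderiv ℝ w p‖ ≤ η)} <
      ENNReal.ofReal c * μ (ball 0 r))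
    {x : E} (hx : x ∈ ball (0 : E) 1) :
    |w x - w 0| ≤ η + L * c + 3 * L * r := by
  have hc : 0 < c := ENNReal.ofReal_pos.1 (pos_iff_ne_zero.2 (left_ne_zero_of_mul hS.ne_bot))
  have hr₀ : 0 < r :=
    nonempty_ball.1 (nonempty_of_measure_ne_zero (right_ne_zero_of_mul hS.ne_bot))
  obtain ⟨w', hw', hww'⟩ := hw.extend_real
  set S := {p ∈ ball (0 : E) 1 | ¬(DifferentiableAt ℝ w p ∧ ‖fderiv ℝ w p‖ ≤ η)}
  have hgood : ∀ p ∈ ball (0 : E) 1 \ S, DifferentiableAt ℝ w' p ∧ ‖fderiv ℝ w' p‖ ≤ η := by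
    rintro p ⟨hp, hpS⟩
    have hloc : w =ᶠ[𝓝 p] w' := hww'.eventuallyEq_of_mem (isOpen_ball.mem_nhds hp)
    rw [← hloc.differentiableAt_iff, ← hloc.fderiv_eq]
    by_contra h
    exact hpS ⟨hp, h⟩
  -- shrinking `x` to `(1 - r) • x` keeps the segments starting in `B_r` inside `B₁`
  have hx' : ‖(1 - r) • x‖ ≤ 1 - r := by
    rw [norm_smul, Real.norm_of_nonneg (by linarith)]
    exact mul_le_of_le_one_right (by linarith) (mem_ball_zero_iff.1 hx).le
  have hmain := hw'.abs_sub_le_of_norm_fderiv_le_outside μ hη hS hgood (by linarith)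
  have hshrink : |w' x - w' ((1 - r) • x)| ≤ L * r :=
    calc |w' x - w' ((1 - r) • x)| ≤ L * ‖x - (1 - r) • x‖ := by
          simpa [Real.dist_eq, dist_eq_norm] using hw'.dist_le_mul x ((1 - r) • x)
      _ = L * (r * ‖x‖) := by
          rw [sub_smul, one_smul, sub_sub_cancel, norm_smul, Real.norm_of_nonneg hr₀.le]
      _ ≤ L * r := by gcongr; exact mul_le_of_le_one_right hr₀.le (mem_ball_zero_iff.1 hx).le
  have hmain' : (η + L * c) * ‖(1 - r) • x‖ ≤ η + L * c :=
    mul_le_of_le_one_right (by positivity) (hx'.trans (by linarith))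
  rw [hww' hx, hww' (mem_ball_self one_pos)]
  linarith [abs_sub_le (w' x) (w' ((1 - r) • x)) (w' 0)]

end Segment

section AddHaar

variable {E : Type*} [NormedAddCommGroup E] [NormedSpace ℝ E] [FiniteDimensional ℝ E]
  [MeasurableSpace E] [BorelSpace E] (μ : Measure E) [μ.IsAddHaarMeasure]

theorem ofReal_mul_pow_div_two_mul_addHaar_ball_one_lt {c r : ℝ} (hc : 0 < c) (hr : 0 < r) :
    ENNReal.ofReal (c * r ^ Module.finrank ℝ E / 2) * μ (ball 0 1) <
      ENNReal.ofReal c * μ (ball 0 r) := by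
  rw [Measure.addHaar_ball_of_pos μ _ hr, ← mul_assoc, ← ENNReal.ofReal_mul hc.le,
    ENNReal.mul_lt_mul_iff_left (measure_ball_pos μ 0 one_pos).ne' measure_ball_lt_top.ne,
    ENNReal.ofReal_lt_ofReal_iff (by positivity)]
  linarith [show 0 < c * r ^ Module.finrank ℝ E by positivity]

end AddHaar

section Gradient

variable {F : Type*} [NormedAddCommGroup F] [InnerProductSpace ℝ F]

theorem norm_sub_le_of_one_sub_sq_div_two_le_inner {g e : F} {η : ℝ} (hg : ‖g‖ ≤ 1)
    (he : ‖e‖ = 1) (hη : 0 ≤ η) (h : 1 - η ^ 2 / 2 ≤ ⟪g, e⟫) : ‖g - e‖ ≤ η := by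
  refine pow_le_pow_iff_left₀ (norm_nonneg _) hη two_ne_zero |>.1 ?_
  rw [norm_sub_sq_real, he]
  nlinarith [norm_nonneg g]

variable [CompleteSpace F]

theorem DifferentiableAt.hasFDerivAt_sub_inner {f : F → ℝ} {p : F} (hf : DifferentiableAt ℝ f p)
    (e : F) : HasFDerivAt (fun x => f x - ⟪e, x⟫) (toDual ℝ F (gradient f p - e)) p := by
  rw [map_sub, toDual_gradient]
  exact hf.hasFDerivAt.sub (toDual ℝ F e).hasFDerivAt

variable [FiniteDimensional ℝ F] [MeasurableSpace F] [BorelSpace F] (μ : Measure F)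
  [μ.IsAddHaarMeasure]

theorem LipschitzOnWith.measure_not_norm_fderiv_sub_inner_le {f : F → ℝ} {U : Set F} (hU : IsOpen U)
    (hf : LipschitzOnWith 1 f U) {e : F} (he : ‖e‖ = 1) {η : ℝ} (hη : 0 ≤ η) :
    μ {p ∈ U | ¬(DifferentiableAt ℝ (fun x => f x - ⟪e, x⟫) p ∧
        ‖fderiv ℝ (fun x => f x - ⟪e, x⟫) p‖ ≤ η)} ≤
      μ {p ∈ U | DifferentiableAt ℝ f p ∧ ⟪gradient f p, e⟫ ≤ 1 - η ^ 2 / 2} := by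
  refine measure_mono_ae ?_
  filter_upwards [hf.ae_differentiableWithinAt_of_mem (μ := μ)] with p hdiff ⟨hpU, hbad⟩
  have hfp : DifferentiableAt ℝ f p := (hdiff hpU).differentiableAt (hU.mem_nhds hpU)
  have hw := hfp.hasFDerivAt_sub_inner e
  refine ⟨hpU, hfp, le_of_not_gt fun hgt => hbad ⟨hw.differentiableAt, ?_⟩⟩
  have hgrad : ‖gradient f p‖ ≤ 1 := by
    rw [← (toDual ℝ F).norm_map, toDual_gradient]
    exact hfp.hasFDerivAt.le_of_lipschitzOn (hU.mem_nhds hpU) hf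
  rw [hw.fderiv, LinearIsometryEquiv.norm_map]
  exact norm_sub_le_of_one_sub_sq_div_two_le_inner hgrad he hη hgt.le

end Gradient

theorem proximity_to_affine_general
    (n : ℕ) :
    ∀ ε > (0 : ℝ),
      ∃ μ ∈ Set.Ioo (0 : ℝ) 1, ∃ δ ∈ Set.Ioo (0 : ℝ) 1,
        ∀ (v : EuclideanSpace ℝ (Fin n) → ℝ) (e : EuclideanSpace ℝ (Fin n)),
          LipschitzOnWith 1 v (Metric.ball 0 2) →
          v 0 = 0 →
          ‖e‖ = 1 →
          volume {x ∈ Metric.ball (0 : EuclideanSpace ℝ (Fin n)) 1 |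
              DifferentiableAt ℝ v x ∧ ⟪gradient v x, e⟫ ≤ δ} ≤
            ENNReal.ofReal μ * volume (Metric.ball (0 : EuclideanSpace ℝ (Fin n)) 1) →
          ∃ a ∈ Set.Icc (-1 : ℝ) 1, ∃ ξ : EuclideanSpace ℝ (Fin n), ‖ξ‖ = 1 ∧
            ∀ x ∈ Metric.ball (0 : EuclideanSpace ℝ (Fin n)) 1,
              |v x - (a + ⟪ξ, x⟫)| ≤ ε := by
  intro ε hε
  obtain ⟨ε', hε'₀, hε'₁, hε'ε⟩ : ∃ ε', 0 < ε' ∧ ε' ≤ 1 ∧ ε' ≤ ε :=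
    ⟨min ε 1, lt_min hε one_pos, min_le_right _ _, min_le_left _ _⟩
  have hr : ε' / 12 ≤ 1 := by linarith
  -- `η = ε' / 4`, `c = ε' / 8`, `r = ε' / 12`, so that `η + 2c + 6r = ε'`
  refine ⟨ε' / 8 * (ε' / 12) ^ n / 2, ⟨by positivity, ?_⟩, 1 - (ε' / 4) ^ 2 / 2,
    ⟨by nlinarith, by nlinarith⟩, fun v e hv hv0 he hvol => ?_⟩
  · calc ε' / 8 * (ε' / 12) ^ n / 2 ≤ 1 / 8 * 1 / 2 := by
          gcongr; exact pow_le_one₀ (by positivity) hr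
      _ < 1 := by norm_num
  have hball := ofReal_mul_pow_div_two_mul_addHaar_ball_one_lt
    (volume : Measure (EuclideanSpace ℝ (Fin n))) (c := ε' / 8) (r := ε' / 12)
    (by positivity) (by positivity)
  rw [finrank_euclideanSpace_fin] at hball
  have hinner : LipschitzWith 1 fun x => ⟪e, x⟫ := by
    have : ‖innerSL ℝ e‖₊ = 1 := NNReal.eq (by simp [he])
    simpa [this] using (innerSL ℝ e).lipschitz
  have hv₁ : LipschitzOnWith 1 v (ball 0 1) := hv.mono (ball_subset_ball one_le_two)
  have hw : LipschitzOnWith 2 (fun x => v x - ⟪e, x⟫) (ball 0 1) := by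
    simpa [one_add_one_eq_two] using hv₁.sub hinner.lipschitzOnWith
  have hsmall := (hv₁.measure_not_norm_fderiv_sub_inner_le
    volume isOpen_ball he (by positivity : 0 ≤ ε' / 4)).trans_lt (hvol.trans_lt hball)
  refine ⟨0, by norm_num, e, he, fun x hx => ?_⟩
  have hclose := hw.abs_sub_le_of_measure_not_norm_fderiv_le_lt volume (by positivity) hr hsmall hx
  simp only [hv0, inner_zero_right, sub_zero, zero_add] at hclose ⊢
  push_cast at hclose
  linarith

theorem proximity_to_affine
    (n : ℕ) (hn : 1 ≤ n) :
    ∀ ε > (0 : ℝ),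
      ∃ μ ∈ Set.Ioo (0 : ℝ) 1, ∃ δ ∈ Set.Ioo (0 : ℝ) 1,
        ∀ (v : EuclideanSpace ℝ (Fin n) → ℝ) (e : EuclideanSpace ℝ (Fin n)),
          LipschitzOnWith 1 v (Metric.ball 0 2) →
          v 0 = 0 →
          ‖e‖ = 1 →
          volume {x ∈ Metric.ball (0 : EuclideanSpace ℝ (Fin n)) 1 |
              DifferentiableAt ℝ v x ∧ ⟪gradient v x, e⟫ ≤ δ} ≤
            ENNReal.ofReal μ * volume (Metric.ball (0 : EuclideanSpace ℝ (Fin n)) 1) →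
          ∃ a ∈ Set.Icc (-1 : ℝ) 1, ∃ ξ : EuclideanSpace ℝ (Fin n), ‖ξ‖ = 1 ∧
            ∀ x ∈ Metric.ball (0 : EuclideanSpace ℝ (Fin n)) 1,
              |v x - (a + ⟪ξ, x⟫)| ≤ ε :=
  proximity_to_affine_general n
end

section
/- Let n ≥ 1, α₁ ∈ (0,1), r ∈ (0,1), λ ∈ (0,1) and α > 0 with α ≤ α₁/2 and λ^{α₁/2} (4/r)^{1+α₁} ≤ 1. Let v : ℝⁿ → ℝ satisfy v(0) = 0, |v(x)| ≤ max{1, |x|^{1+α₁}} for all x ∈ ℝⁿ, and suppose v is differentiable at every point of B_{r/4} with |Dv(x)| ≤ λ^α there. Then the rescaled function w(x) := λ^{−(1+α)} v(λx) satisfies |w(x)| ≤ max{1, |x|^{1+α₁}} for all x ∈ ℝⁿ. -/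
open Metric

/-!
Near the origin, `|λx| < r/4`, the mean value inequality gives `|v(λx)| ≤ λ^α · λ|x|`, so the
rescaled function is bounded by `|x|`. Far from it, `1 ≤ (4/r)·λ|x|` lets us replace
`max 1 ((λ|x|)^(1+α₁))` by `((4/r)·λ|x|)^(1+α₁)`, and the factor `λ^(α₁-α) (4/r)^(1+α₁)` left
after rescaling is at most `λ^(α₁/2) (4/r)^(1+α₁) ≤ 1`.
-/

theorem norm_gradient {E : Type*} [NormedAddCommGroup E] [InnerProductSpace ℝ E] [CompleteSpace E]
    (f : E → ℝ) (x : E) : ‖gradient f x‖ = ‖fderiv ℝ f x‖ :=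
  (InnerProductSpace.toDual ℝ E).symm.norm_map _

theorem abs_le_mul_norm_of_norm_gradient_le {E : Type*} [NormedAddCommGroup E]
    [InnerProductSpace ℝ E] [CompleteSpace E] {f : E → ℝ} {R C : ℝ} (hf0 : f 0 = 0)
    (hf : ∀ x ∈ ball (0 : E) R, DifferentiableAt ℝ f x ∧ ‖gradient f x‖ ≤ C)
    {y : E} (hy : y ∈ ball (0 : E) R) : |f y| ≤ C * ‖y‖ := by
  have hR : 0 < R := pos_of_mem_ball hy
  have h := (convex_ball (0 : E) R).norm_image_sub_le_of_norm_fderiv_le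
    (fun x hx => (hf x hx).1) (fun x hx => norm_gradient f x ▸ (hf x hx).2)
    (mem_ball_self hR) hy
  simpa [hf0] using h

theorem le_max_one_rpow {t p : ℝ} (hp : 1 ≤ p) : t ≤ max 1 (t ^ p) := by
  rcases le_or_gt t 1 with h | h
  · exact le_max_of_le_left h
  · exact le_max_of_le_right (Real.self_le_rpow_of_one_le h.le hp)

theorem max_one_rpow_le_mul_rpow {s b p : ℝ} (hs : 0 ≤ s) (hb : 1 ≤ b) (hsb : 1 ≤ s * b)
    (hp : 0 ≤ p) : max 1 (s ^ p) ≤ (s * b) ^ p := by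
  refine max_le ?_ ?_
  · simpa using Real.rpow_le_rpow zero_le_one hsb hp
  · exact Real.rpow_le_rpow hs (le_mul_of_one_le_right hs hb) hp

section Rescaling

variable {lam α α₁ : ℝ}

theorem rpow_neg_one_add_mul_rpow_mul_mul (hl0 : 0 < lam) (t : ℝ) :
    lam ^ (-(1 + α)) * (lam ^ α * (lam * t)) = t := by
  rw [← mul_assoc, ← mul_assoc, ← Real.rpow_add hl0, ← Real.rpow_add_one hl0.ne']
  simp

theorem rpow_neg_one_add_mul_rpow_le {c t : ℝ} (hl0 : 0 < lam) (hl1 : lam ≤ 1)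
    (hα : α ≤ α₁ / 2) (hc : 0 ≤ c) (ht : 0 ≤ t) (hsmall : lam ^ (α₁ / 2) * c ^ (1 + α₁) ≤ 1) :
    lam ^ (-(1 + α)) * (lam * t * c) ^ (1 + α₁) ≤ t ^ (1 + α₁) := by
  have hgain : lam ^ (α₁ - α) ≤ lam ^ (α₁ / 2) :=
    Real.rpow_le_rpow_of_exponent_ge hl0 hl1 (by linarith)
  calc lam ^ (-(1 + α)) * (lam * t * c) ^ (1 + α₁)
      = lam ^ (α₁ - α) * c ^ (1 + α₁) * t ^ (1 + α₁) := by
        rw [Real.mul_rpow (by positivity) hc, Real.mul_rpow hl0.le ht,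
          show α₁ - α = -(1 + α) + (1 + α₁) by ring, Real.rpow_add hl0 (-(1 + α)) (1 + α₁)]
        ring
    _ ≤ lam ^ (α₁ / 2) * c ^ (1 + α₁) * t ^ (1 + α₁) := by gcongr
    _ ≤ t ^ (1 + α₁) := mul_le_of_le_one_left (by positivity) hsmall

end Rescaling

theorem growth_propagation_rescaled_general
    (n : ℕ)
    (α₁ r lam α : ℝ)
    (hα₁ : α₁ ∈ Set.Ioo (0 : ℝ) 1) (hr : r ∈ Set.Ioo (0 : ℝ) 1)
    (hlam : lam ∈ Set.Ioo (0 : ℝ) 1)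
    (hα_le : α ≤ α₁ / 2)
    (hsmall : lam ^ (α₁ / 2) * (4 / r) ^ (1 + α₁) ≤ 1)
    (v : EuclideanSpace ℝ (Fin n) → ℝ)
    (hv0 : v 0 = 0)
    (hv_growth : ∀ x, |v x| ≤ max 1 (‖x‖ ^ (1 + α₁)))
    (hv_grad : ∀ x ∈ Metric.ball (0 : EuclideanSpace ℝ (Fin n)) (r / 4),
      DifferentiableAt ℝ v x ∧ ‖gradient v x‖ ≤ lam ^ α) :
    ∀ x : EuclideanSpace ℝ (Fin n),
      |lam ^ (-(1 + α)) * v (lam • x)| ≤ max 1 (‖x‖ ^ (1 + α₁)) := by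
  intro x
  have hl0 := hlam.1
  have hscale : 0 < lam ^ (-(1 + α)) := Real.rpow_pos_of_pos hl0 _
  have hnorm : ‖lam • x‖ = lam * ‖x‖ := by rw [norm_smul, Real.norm_of_nonneg hl0.le]
  rw [abs_mul, abs_of_pos hscale]
  rcases lt_or_ge (lam * ‖x‖) (r / 4) with hnear | hfar
  · have hmvt := abs_le_mul_norm_of_norm_gradient_le hv0 hv_grad
      (y := lam • x) (by rwa [mem_ball_zero_iff, hnorm])
    calc lam ^ (-(1 + α)) * |v (lam • x)| ≤ lam ^ (-(1 + α)) * (lam ^ α * (lam * ‖x‖)) := by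
          rw [← hnorm]; gcongr
      _ = ‖x‖ := rpow_neg_one_add_mul_rpow_mul_mul hl0 _
      _ ≤ max 1 (‖x‖ ^ (1 + α₁)) := le_max_one_rpow (by linarith [hα₁.1])
  · have h4r : 1 ≤ 4 / r := by rw [le_div_iff₀ hr.1]; linarith [hr.2]
    have hfar' : 1 ≤ lam * ‖x‖ * (4 / r) := by
      rw [mul_div_assoc', le_div_iff₀ hr.1]; linarith
    have hgrowth := hv_growth (lam • x)
    rw [hnorm] at hgrowth
    calc lam ^ (-(1 + α)) * |v (lam • x)|
        ≤ lam ^ (-(1 + α)) * (lam * ‖x‖ * (4 / r)) ^ (1 + α₁) := by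
          gcongr
          exact hgrowth.trans
            (max_one_rpow_le_mul_rpow (by positivity) h4r hfar' (by linarith [hα₁.1]))
      _ ≤ ‖x‖ ^ (1 + α₁) :=
          rpow_neg_one_add_mul_rpow_le hl0 hlam.2.le hα_le (zero_le_one.trans h4r) (norm_nonneg x)
            hsmall
      _ ≤ max 1 (‖x‖ ^ (1 + α₁)) := le_max_right _ _

theorem growth_propagation_rescaled
    (n : ℕ) (hn : 1 ≤ n)
    (α₁ r lam α : ℝ)
    (hα₁ : α₁ ∈ Set.Ioo (0 : ℝ) 1) (hr : r ∈ Set.Ioo (0 : ℝ) 1)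
    (hlam : lam ∈ Set.Ioo (0 : ℝ) 1)
    (hα_pos : 0 < α) (hα_le : α ≤ α₁ / 2)
    (hsmall : lam ^ (α₁ / 2) * (4 / r) ^ (1 + α₁) ≤ 1)
    (v : EuclideanSpace ℝ (Fin n) → ℝ)
    (hv0 : v 0 = 0)
    (hv_growth : ∀ x, |v x| ≤ max 1 (‖x‖ ^ (1 + α₁)))
    (hv_grad : ∀ x ∈ Metric.ball (0 : EuclideanSpace ℝ (Fin n)) (r / 4),
      DifferentiableAt ℝ v x ∧ ‖gradient v x‖ ≤ lam ^ α) :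
    ∀ x : EuclideanSpace ℝ (Fin n),
      |lam ^ (-(1 + α)) * v (lam • x)| ≤ max 1 (‖x‖ ^ (1 + α₁)) :=
  growth_propagation_rescaled_general n α₁ r lam α hα₁ hr hlam hα_le hsmall v hv0 hv_growth hv_grad
end

section
/- Let n ≥ 1, α₁ ∈ (0,1), β ∈ (0, α₁), and λ ∈ (0,1) with 4 λ^{α₁−β} ≤ 1. Let u : ℝⁿ → ℝ satisfy |u(x)| ≤ max{1, |x|^{1+α₁}} for all x ∈ ℝⁿ, and let ℓ(x) := a + ξ · x be an affine function with |a| ≤ 2 and |ξ| = 1, such that sup_{x ∈ B₁} |u(x) − ℓ(x)| ≤ λ². Then the rescaled function w(x) := λ^{−(1+β)} (u(λx) − ℓ(λx)) satisfies |w(x)| ≤ max{1, |x|^{1+α₁}} for all x ∈ ℝⁿ. -/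
/-! Inside the ball `‖λx‖ < 1` the closeness hypothesis gives `|w(x)| ≤ λ^{-(1+β)} λ² = λ^{1-β} ≤ 1`.
Outside it, `|u - ℓ| ≤ 4 |λx|^{1+α₁}` by the growth bound, `|a| ≤ 2` and `|ξ| = 1`, so
`|w(x)| ≤ 4 λ^{α₁-β} |x|^{1+α₁} ≤ |x|^{1+α₁}`. -/

open Metric MeasureTheory Filter Set
open scoped RealInnerProductSpace

theorem abs_sub_affine_le_four_mul_rpow {E : Type*} [NormedAddCommGroup E]
    [InnerProductSpace ℝ E] {p a : ℝ} {f : E → ℝ} {y ξ : E} (hp : 1 ≤ p)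
    (hf : |f y| ≤ max 1 (‖y‖ ^ p)) (hy : 1 ≤ ‖y‖) (ha : |a| ≤ 2) (hξ : ‖ξ‖ = 1) :
    |f y - (a + ⟪ξ, y⟫)| ≤ 4 * ‖y‖ ^ p := by
  have hone : 1 ≤ ‖y‖ ^ p := Real.one_le_rpow hy (by linarith)
  have hself : ‖y‖ ≤ ‖y‖ ^ p := Real.self_le_rpow_of_one_le hy hp
  have hinner : |⟪ξ, y⟫| ≤ ‖y‖ := by
    simpa [hξ] using abs_real_inner_le_norm ξ y
  rw [max_eq_right hone] at hf
  calc |f y - (a + ⟪ξ, y⟫)| ≤ |f y| + (|a| + |⟪ξ, y⟫|) :=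
        (abs_sub _ _).trans (add_le_add_right (abs_add_le _ _) _)
    _ ≤ 4 * ‖y‖ ^ p := by linarith

theorem Real.rpow_neg_one_add_mul_sq_le_one {lam β : ℝ} (hlam₀ : 0 < lam) (hlam₁ : lam ≤ 1)
    (hβ : β ≤ 1) : lam ^ (-(1 + β)) * lam ^ 2 ≤ 1 := by
  rw [← Real.rpow_natCast, ← Real.rpow_add hlam₀]
  exact Real.rpow_le_one hlam₀.le hlam₁ (by push_cast; linarith)

theorem Real.rpow_neg_one_add_mul_four_mul_rpow_le {lam α β r : ℝ} (hlam : 0 < lam)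
    (hr : 0 ≤ r) (hsmall : 4 * lam ^ (α - β) ≤ 1) :
    lam ^ (-(1 + β)) * (4 * (lam * r) ^ (1 + α)) ≤ r ^ (1 + α) := by
  have hexp : lam ^ (-(1 + β)) * lam ^ (1 + α) = lam ^ (α - β) := by
    rw [← Real.rpow_add hlam]
    ring_nf
  have hrp : 0 ≤ r ^ (1 + α) := Real.rpow_nonneg hr _
  calc lam ^ (-(1 + β)) * (4 * (lam * r) ^ (1 + α))
      = 4 * lam ^ (α - β) * r ^ (1 + α) := by
        rw [Real.mul_rpow hlam.le hr, ← hexp]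
        ring
    _ ≤ r ^ (1 + α) := mul_le_of_le_one_left hrp hsmall

theorem growth_bound_small_perturbation_rescaling_general
    (n : ℕ)
    (α₁ β lam : ℝ)
    (hα₁ : α₁ ∈ Set.Ioo (0 : ℝ) 1) (hβ : β ∈ Set.Ioo (0 : ℝ) α₁)
    (hlam : lam ∈ Set.Ioo (0 : ℝ) 1)
    (hsmall : 4 * lam ^ (α₁ - β) ≤ 1)
    (u : EuclideanSpace ℝ (Fin n) → ℝ)
    (hu_growth : ∀ x, |u x| ≤ max 1 (‖x‖ ^ (1 + α₁)))
    (a : ℝ) (ξ : EuclideanSpace ℝ (Fin n))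
    (ha : |a| ≤ 2) (hξ : ‖ξ‖ = 1)
    (hclose : ∀ x ∈ Metric.ball (0 : EuclideanSpace ℝ (Fin n)) 1,
      |u x - (a + ⟪ξ, x⟫)| ≤ lam ^ 2) :
    ∀ x : EuclideanSpace ℝ (Fin n),
      |lam ^ (-(1 + β) : ℝ) * (u (lam • x) - (a + ⟪ξ, lam • x⟫))| ≤
        max 1 (‖x‖ ^ (1 + α₁)) := by
  intro x
  obtain ⟨hlam₀, hlam₁⟩ := hlam
  have hscale : 0 < lam ^ (-(1 + β)) := Real.rpow_pos_of_pos hlam₀ _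
  have hnorm : ‖lam • x‖ = lam * ‖x‖ := by rw [norm_smul, Real.norm_of_nonneg hlam₀.le]
  rw [abs_mul, abs_of_pos hscale]
  rcases lt_or_ge ‖lam • x‖ 1 with hin | hout
  · calc lam ^ (-(1 + β)) * |u (lam • x) - (a + ⟪ξ, lam • x⟫)|
        ≤ lam ^ (-(1 + β)) * lam ^ 2 := by gcongr; exact hclose _ (mem_ball_zero_iff.2 hin)
      _ ≤ 1 := Real.rpow_neg_one_add_mul_sq_le_one hlam₀ hlam₁.le (by linarith [hβ.2, hα₁.2])
      _ ≤ _ := le_max_left _ _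
  · have hdiff := abs_sub_affine_le_four_mul_rpow (by linarith [hα₁.1]) (hu_growth _) hout ha hξ
    rw [hnorm] at hdiff
    calc lam ^ (-(1 + β)) * |u (lam • x) - (a + ⟪ξ, lam • x⟫)|
        ≤ lam ^ (-(1 + β)) * (4 * (lam * ‖x‖) ^ (1 + α₁)) := by gcongr
      _ ≤ ‖x‖ ^ (1 + α₁) :=
        Real.rpow_neg_one_add_mul_four_mul_rpow_le hlam₀ (norm_nonneg x) hsmall
      _ ≤ _ := le_max_right _ _

theorem growth_bound_small_perturbation_rescaling
    (n : ℕ) (hn : 1 ≤ n)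
    (α₁ β lam : ℝ)
    (hα₁ : α₁ ∈ Set.Ioo (0 : ℝ) 1) (hβ : β ∈ Set.Ioo (0 : ℝ) α₁)
    (hlam : lam ∈ Set.Ioo (0 : ℝ) 1)
    (hsmall : 4 * lam ^ (α₁ - β) ≤ 1)
    (u : EuclideanSpace ℝ (Fin n) → ℝ)
    (hu_growth : ∀ x, |u x| ≤ max 1 (‖x‖ ^ (1 + α₁)))
    (a : ℝ) (ξ : EuclideanSpace ℝ (Fin n))
    (ha : |a| ≤ 2) (hξ : ‖ξ‖ = 1)
    (hclose : ∀ x ∈ Metric.ball (0 : EuclideanSpace ℝ (Fin n)) 1,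
      |u x - (a + ⟪ξ, x⟫)| ≤ lam ^ 2) :
    ∀ x : EuclideanSpace ℝ (Fin n),
      |lam ^ (-(1 + β) : ℝ) * (u (lam • x) - (a + ⟪ξ, lam • x⟫))| ≤
        max 1 (‖x‖ ^ (1 + α₁)) :=
  growth_bound_small_perturbation_rescaling_general n α₁ β lam hα₁ hβ hlam hsmall u hu_growth a ξ ha
    hξ hclose
end
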